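/- Let E₁, E₂ be finite-dimensional Euclidean spaces and g : E₁ × E₂ → ℝ a continuous even function (g(−x,−y) = g(x,y)) bounded from below. Then −S₁(−Hg) ≤ H S₂ g pointwise on E₁ × E₂; equivalently, for all x, y, t, u, v, w one has Hg(t+x, y) + Hg(t−x, y) ≤ g(x+u, w+y+v) + g(−x−u, −w+y+v) + |u|² + |v|² + |w|² + |t|². -/

import Mathlib

/-!
Testing the infimum defining `Hg(t ± x, y)` at the displacements `(u - t, v + w)` and
`(-(u + t), v - w)`, the parallelogram law turns the sum of the two quadratic costs into
`|u|² + |v|² + |w|² + |t|²`, which is the second inequality. The first one is a reformulation: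
by evenness `g(-x-u, -w+y+v) = g(x+u, w-(y+v))`, so the right-hand side of the second inequality
is a value of `2 (S₂g(x+u, y+v) + ½|u|² + ½|v|²) + |t|²` before taking the infimum over `w`.
-/

open MeasureTheory Real

/-- The infimum convolution with the Euclidean quadratic cost on `E₁ × E₂`:
`Hg(x,y) = inf_{u,v} ( g(x+u, y+v) + ½|u|² + ½|v|² )`. -/
noncomputable def H2 {E₁ E₂ : Type*} [NormedAddCommGroup E₁] [NormedAddCommGroup E₂]
    (g : E₁ → E₂ → ℝ) (x : E₁) (y : E₂) : ℝ :=
  ⨅ p : E₁ × E₂, (g (x + p.1) (y + p.2) + ‖p.1‖ ^ 2 / 2 + ‖p.2‖ ^ 2 / 2)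

/-- The partial symmetrisation in the first variable:
`S₁g(x,y) = inf_u ( ½(g(u+x, y) + g(u−x, y)) + ½|u|² )`. -/
noncomputable def S1 {E₁ E₂ : Type*} [NormedAddCommGroup E₁]
    (g : E₁ → E₂ → ℝ) (x : E₁) (y : E₂) : ℝ :=
  ⨅ u : E₁, ((g (u + x) y + g (u - x) y) / 2 + ‖u‖ ^ 2 / 2)

/-- The partial symmetrisation in the second variable:
`S₂g(x,y) = inf_v ( ½(g(x, v+y) + g(x, v−y)) + ½|v|² )`. -/
noncomputable def S2 {E₁ E₂ : Type*} [NormedAddCommGroup E₂]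
    (g : E₁ → E₂ → ℝ) (x : E₁) (y : E₂) : ℝ :=
  ⨅ v : E₂, ((g x (v + y) + g x (v - y)) / 2 + ‖v‖ ^ 2 / 2)

open Function

section Normed

variable {E₁ E₂ : Type*}

theorem H2_le [NormedAddCommGroup E₁] [NormedAddCommGroup E₂] {g : E₁ → E₂ → ℝ}
    (hg : BddBelow (Set.range (uncurry g))) (x : E₁) (y : E₂) (p : E₁) (q : E₂) :
    H2 g x y ≤ g (x + p) (y + q) + ‖p‖ ^ 2 / 2 + ‖q‖ ^ 2 / 2 := by
  obtain ⟨c, hc⟩ := hg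
  refine ciInf_le ⟨c, ?_⟩ (p, q)
  rintro _ ⟨r, rfl⟩
  have hcr : c ≤ g (x + r.1) (y + r.2) := hc ⟨(x + r.1, y + r.2), rfl⟩
  dsimp only
  linarith [sq_nonneg ‖r.1‖, sq_nonneg ‖r.2‖]

theorem le_H2 [NormedAddCommGroup E₁] [NormedAddCommGroup E₂] {g : E₁ → E₂ → ℝ}
    {c : ℝ} {x : E₁} {y : E₂}
    (h : ∀ p q, c ≤ g (x + p) (y + q) + ‖p‖ ^ 2 / 2 + ‖q‖ ^ 2 / 2) : c ≤ H2 g x y :=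
  le_ciInf fun p => h p.1 p.2

theorem le_S2 [NormedAddCommGroup E₂] {g : E₁ → E₂ → ℝ} {c : ℝ} {x : E₁} {y : E₂}
    (h : ∀ v, c ≤ (g x (v + y) + g x (v - y)) / 2 + ‖v‖ ^ 2 / 2) : c ≤ S2 g x y :=
  le_ciInf h

theorem neg_S1_neg_le [NormedAddCommGroup E₁] {f : E₁ → E₂ → ℝ} {c : ℝ} {x : E₁} {y : E₂}
    (h : ∀ u, (f (u + x) y + f (u - x) y) / 2 - ‖u‖ ^ 2 / 2 ≤ c) :
    -S1 (fun a b => -f a b) x y ≤ c := by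
  rw [neg_le]
  exact le_ciInf fun u => by linarith [h u]

end Normed

section InnerProduct

variable {E₁ E₂ : Type*} [NormedAddCommGroup E₁] [InnerProductSpace ℝ E₁]
  [NormedAddCommGroup E₂] [InnerProductSpace ℝ E₂] {g : E₁ → E₂ → ℝ}

theorem H2_add_H2_sub_le (hg : BddBelow (Set.range (uncurry g)))
    (x t u : E₁) (y v w : E₂) :
    H2 g (t + x) y + H2 g (t - x) y ≤
      g (x + u) (w + y + v) + g (-x - u) (-w + y + v) +
        ‖u‖ ^ 2 + ‖v‖ ^ 2 + ‖w‖ ^ 2 + ‖t‖ ^ 2 := by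
  have h₁ := H2_le hg (t + x) y (u - t) (v + w)
  have h₂ := H2_le hg (t - x) y (-(u + t)) (v - w)
  rw [show t + x + (u - t) = x + u by abel, show y + (v + w) = w + y + v by abel] at h₁
  rw [show t - x + -(u + t) = -x - u by abel, show y + (v - w) = -w + y + v by abel,
    norm_neg] at h₂
  linarith [parallelogram_law_with_norm ℝ u t, parallelogram_law_with_norm ℝ v w]

theorem H2_add_H2_sub_le_two_mul_H2_S2 (hg : BddBelow (Set.range (uncurry g)))
    (hg_even : ∀ x y, g (-x) (-y) = g x y) (x t : E₁) (y : E₂) :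
    H2 g (t + x) y + H2 g (t - x) y ≤ 2 * H2 (S2 g) x y + ‖t‖ ^ 2 := by
  suffices (H2 g (t + x) y + H2 g (t - x) y - ‖t‖ ^ 2) / 2 ≤ H2 (S2 g) x y by linarith
  refine le_H2 fun u v => ?_
  suffices (H2 g (t + x) y + H2 g (t - x) y - ‖t‖ ^ 2) / 2 - ‖u‖ ^ 2 / 2 - ‖v‖ ^ 2 / 2 ≤
      S2 g (x + u) (y + v) by linarith
  refine le_S2 fun w => ?_
  have h_even : g (-x - u) (-w + y + v) = g (x + u) (w - (y + v)) := by
    rw [← hg_even (x + u)]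
    congr 1 <;> abel
  have key := H2_add_H2_sub_le hg x t u y v w
  rw [h_even, add_assoc w] at key
  linarith

end InnerProduct

theorem neg_S1_neg_H_le_H_S2_general {E₁ E₂ : Type*}
    [NormedAddCommGroup E₁] [InnerProductSpace ℝ E₁]
    [NormedAddCommGroup E₂] [InnerProductSpace ℝ E₂]
    (g : E₁ → E₂ → ℝ)
    (hg_even : ∀ x y, g (-x) (-y) = g x y)
    (hg_bdd : BddBelow (Set.range (Function.uncurry g))) :
    (∀ (x : E₁) (y : E₂),
        -S1 (fun a b => -H2 g a b) x y ≤ H2 (S2 g) x y) ∧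
      ∀ (x t u : E₁) (y v w : E₂),
        H2 g (t + x) y + H2 g (t - x) y ≤
          g (x + u) (w + y + v) + g (-x - u) (-w + y + v) +
            ‖u‖ ^ 2 + ‖v‖ ^ 2 + ‖w‖ ^ 2 + ‖t‖ ^ 2 :=
  ⟨fun x y => neg_S1_neg_le fun t => by
      linarith [H2_add_H2_sub_le_two_mul_H2_S2 hg_bdd hg_even x t y],
    H2_add_H2_sub_le hg_bdd⟩

/-- For a continuous, even, bounded-from-below `g` on `E₁ × E₂`, one has
`−S₁(−Hg) ≤ H S₂ g` pointwise; equivalently, for all `x, y, t, u, v, w`: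
`Hg(t+x, y) + Hg(t−x, y) ≤ g(x+u, w+y+v) + g(−x−u, −w+y+v) + |u|² + |v|² + |w|² + |t|²`. -/
theorem neg_S1_neg_H_le_H_S2 {E₁ E₂ : Type*}
    [NormedAddCommGroup E₁] [InnerProductSpace ℝ E₁] [FiniteDimensional ℝ E₁]
    [NormedAddCommGroup E₂] [InnerProductSpace ℝ E₂] [FiniteDimensional ℝ E₂]
    (g : E₁ → E₂ → ℝ) (hg_cont : Continuous (Function.uncurry g))
    (hg_even : ∀ x y, g (-x) (-y) = g x y)
    (hg_bdd : BddBelow (Set.range (Function.uncurry g))) :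
    (∀ (x : E₁) (y : E₂),
        -S1 (fun a b => -H2 g a b) x y ≤ H2 (S2 g) x y) ∧
      ∀ (x t u : E₁) (y v w : E₂),
        H2 g (t + x) y + H2 g (t - x) y ≤
          g (x + u) (w + y + v) + g (-x - u) (-w + y + v) +
            ‖u‖ ^ 2 + ‖v‖ ^ 2 + ‖w‖ ^ 2 + ‖t‖ ^ 2 :=
  neg_S1_neg_H_le_H_S2_general g hg_even hg_bdd
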